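/- Let φ : ℝ² → ℝ³ be an injective linear map, ℓ : ℝ² → ℝ a nonzero linear form, u ∈ ℝ² with ℓ(u) = 1, and w ∈ ker ℓ with w ≠ 0, such that ⟨φ(u), φ(w)⟩ = 0. Set t = φ(u)/‖φ(u)‖ and n = (φ(u) × φ(w))/(‖φ(u)‖·‖φ(w)‖), where × denotes the cross product in ℝ³. For arbitrary r ∈ ℝ and θ ∈ ℝ, define the linear map L : ℝ² → ℝ³ by L(v) = φ(v) − ℓ(v)·φ(u) + ℓ(v)·r·(cos θ · t + sin θ · n). Then for all v, v' ∈ ℝ²: ⟨L(v), L(v')⟩ = ⟨φ(v), φ(v')⟩ + (r² − ‖φ(u)‖²)·ℓ(v)·ℓ(v'). -/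

import Mathlib

/-!
Since `ker ℓ` is the line through `w`, every `v` is `ℓ v • u + c • w`, so
`φ v = c • φ w + ℓ v • φ u` and `L v = c • φ w + (ℓ v * r) • e` with `e = cos θ • t + sin θ • n`.
Both `φ u` and `e` are orthogonal to `φ w`, and `e` is a unit vector because `t` and `n` are
orthonormal (by Lagrange's identity `‖a × b‖ = ‖a‖ ‖b‖` for `a ⊥ b`). Hence the two Gram forms
agree on the `φ w`-components and differ only in the `ℓ v * ℓ v'` term, whose coefficient is
`r ^ 2` for `L` and `‖φ u‖ ^ 2` for `φ`.
-/

open scoped RealInnerProductSpace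

noncomputable section

abbrev E2 := EuclideanSpace ℝ (Fin 2)
abbrev E3 := EuclideanSpace ℝ (Fin 3)

/-- The cross product of two vectors of Euclidean `ℝ³`. -/
noncomputable def cross (a b : E3) : E3 :=
  (WithLp.equiv 2 (Fin 3 → ℝ)).symm
    ![a 1 * b 2 - a 2 * b 1, a 2 * b 0 - a 0 * b 2, a 0 * b 1 - a 1 * b 0]

open Matrix

lemma cross_eq_crossProduct (a b : E3) : cross a b = WithLp.toLp 2 (a.ofLp ⨯₃ b.ofLp) := rfl

lemma EuclideanSpace.real_inner_eq_dotProduct {ι : Type*} [Fintype ι] (x y : EuclideanSpace ℝ ι) :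
    ⟪x, y⟫ = x.ofLp ⬝ᵥ y.ofLp := by
  rw [EuclideanSpace.inner_eq_star_dotProduct, star_trivial, dotProduct_comm]

lemma inner_self_cross (a b : E3) : ⟪a, cross a b⟫ = 0 := by
  rw [EuclideanSpace.real_inner_eq_dotProduct]; exact dot_self_cross _ _

lemma inner_cross_self (a b : E3) : ⟪b, cross a b⟫ = 0 := by
  rw [EuclideanSpace.real_inner_eq_dotProduct]; exact dot_cross_self _ _

lemma norm_cross_sq (a b : E3) : ‖cross a b‖ ^ 2 = ‖a‖ ^ 2 * ‖b‖ ^ 2 - ⟪a, b⟫ ^ 2 := by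
  simp only [← real_inner_self_eq_norm_sq, EuclideanSpace.real_inner_eq_dotProduct]
  rw [cross_eq_crossProduct, cross_dot_cross, dotProduct_comm b.ofLp a.ofLp]; ring

lemma norm_cross_of_inner_eq_zero {a b : E3} (h : ⟪a, b⟫ = 0) : ‖cross a b‖ = ‖a‖ * ‖b‖ := by
  rw [← sq_eq_sq₀ (norm_nonneg _) (by positivity), norm_cross_sq, h]; ring

lemma Module.Dual.ker_eq_span_singleton {K V : Type*} [Field K] [AddCommGroup V] [Module K V]
    (hV : Module.finrank K V = 2) {ℓ : Module.Dual K V} (hℓ : ℓ ≠ 0) {w : V} (hw : ℓ w = 0)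
    (hw0 : w ≠ 0) : LinearMap.ker ℓ = K ∙ w := by
  have : FiniteDimensional K V := Module.finite_of_finrank_eq_succ hV
  refine (Submodule.eq_of_le_of_finrank_eq ?_ ?_).symm
  · rwa [Submodule.span_singleton_le_iff_mem]
  · have := ℓ.finrank_ker_add_one_of_ne_zero hℓ
    rw [finrank_span_singleton hw0]; omega

lemma Module.Dual.exists_eq_smul_add_smul {K V : Type*} [Field K] [AddCommGroup V] [Module K V]
    (hV : Module.finrank K V = 2) {ℓ : Module.Dual K V} {u w : V} (hu : ℓ u = 1) (hw : ℓ w = 0)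
    (hw0 : w ≠ 0) (v : V) : ∃ c : K, v = ℓ v • u + c • w := by
  have hℓ : ℓ ≠ 0 := fun h => by simp [h] at hu
  have hmem : v - ℓ v • u ∈ K ∙ w := by
    rw [← ℓ.ker_eq_span_singleton hV hℓ hw hw0, LinearMap.mem_ker]; simp [hu]
  obtain ⟨c, hc⟩ := Submodule.mem_span_singleton.mp hmem
  exact ⟨c, by rw [hc, add_sub_cancel]⟩

section
variable {F : Type*} [NormedAddCommGroup F] [InnerProductSpace ℝ F]

lemma norm_cos_smul_add_sin_smul {t n : F} (ht : ‖t‖ = 1) (hn : ‖n‖ = 1) (htn : ⟪t, n⟫ = 0)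
    (θ : ℝ) : ‖Real.cos θ • t + Real.sin θ • n‖ = 1 := by
  rw [← sq_eq_sq₀ (norm_nonneg _) zero_le_one, one_pow]
  simp only [norm_add_sq_real, norm_smul, mul_pow, Real.norm_eq_abs, sq_abs, ht, hn,
    real_inner_smul_left, real_inner_smul_right, htn]
  linear_combination Real.cos_sq_add_sin_sq θ

lemma inner_smul_add_smul_smul_add_smul {b e : F} (h : ⟪e, b⟫ = 0) (c c' s s' : ℝ) :
    ⟪c • b + s • e, c' • b + s' • e⟫ = c * c' * ‖b‖ ^ 2 + s * s' * ‖e‖ ^ 2 := by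
  have h' : ⟪b, e⟫ = 0 := by rwa [real_inner_comm]
  simp only [inner_add_left, inner_add_right, real_inner_smul_left, real_inner_smul_right,
    real_inner_self_eq_norm_sq, h, h']
  ring

end

lemma norm_cos_smul_add_sin_smul_cross {a b : E3} (ha : a ≠ 0) (hb : b ≠ 0) (hab : ⟪a, b⟫ = 0)
    (θ : ℝ) :
    ‖Real.cos θ • (‖a‖⁻¹ • a) + Real.sin θ • ((‖a‖ * ‖b‖)⁻¹ • cross a b)‖ = 1 := by
  have hab_pos : 0 < ‖a‖ * ‖b‖ := by positivity
  refine norm_cos_smul_add_sin_smul ?_ ?_ ?_ θ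
  · rw [norm_smul, norm_inv, norm_norm, inv_mul_cancel₀ (norm_ne_zero_iff.mpr ha)]
  · rw [norm_smul, norm_inv, norm_cross_of_inner_eq_zero hab, Real.norm_of_nonneg hab_pos.le,
      inv_mul_cancel₀ hab_pos.ne']
  · rw [real_inner_smul_left, real_inner_smul_right, inner_self_cross, mul_zero, mul_zero]

lemma inner_cos_smul_add_sin_smul_cross {a b : E3} (hab : ⟪a, b⟫ = 0) (θ s s' : ℝ) :
    ⟪Real.cos θ • (s • a) + Real.sin θ • (s' • cross a b), b⟫ = 0 := by
  rw [real_inner_comm]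
  simp only [inner_add_right, real_inner_smul_right, real_inner_comm a b ▸ hab, inner_cross_self]
  ring

theorem stmt3_general (φ : E2 →ₗ[ℝ] E3) (hφ : Function.Injective φ)
    (ℓ : E2 →ₗ[ℝ] ℝ)
    (u : E2) (hu : ℓ u = 1)
    (w : E2) (hw : ℓ w = 0) (hw0 : w ≠ 0)
    (horth : ⟪φ u, φ w⟫ = 0)
    (r θ : ℝ)
    (t n : E3)
    (ht : t = ‖φ u‖⁻¹ • φ u)
    (hn : n = (‖φ u‖ * ‖φ w‖)⁻¹ • cross (φ u) (φ w))
    (L : E2 → E3)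
    (hL : ∀ v : E2,
      L v = φ v - ℓ v • φ u + ℓ v • (r • (Real.cos θ • t + Real.sin θ • n))) :
    ∀ v v' : E2,
      ⟪L v, L v'⟫ = ⟪φ v, φ v'⟫ + (r ^ 2 - ‖φ u‖ ^ 2) * (ℓ v * ℓ v') := by
  have hφu : φ u ≠ 0 := (map_ne_zero_iff φ hφ).mpr fun h => by simp [h] at hu
  have hφw : φ w ≠ 0 := (map_ne_zero_iff φ hφ).mpr hw0
  have he : ‖Real.cos θ • t + Real.sin θ • n‖ = 1 :=
    ht ▸ hn ▸ norm_cos_smul_add_sin_smul_cross hφu hφw horth θ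
  have hew : ⟪Real.cos θ • t + Real.sin θ • n, φ w⟫ = 0 :=
    ht ▸ hn ▸ inner_cos_smul_add_sin_smul_cross horth θ _ _
  generalize Real.cos θ • t + Real.sin θ • n = e at he hew hL
  have hdecomp (v : E2) :
      ∃ c : ℝ, φ v = c • φ w + ℓ v • φ u ∧ L v = c • φ w + (ℓ v * r) • e := by
    obtain ⟨c, hc⟩ := Module.Dual.exists_eq_smul_add_smul finrank_euclideanSpace_fin hu hw hw0 v
    have hφv : φ v = c • φ w + ℓ v • φ u := by
      rw [add_comm, ← map_smul, ← map_smul, ← map_add, ← hc]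
    exact ⟨c, hφv, by rw [hL, hφv, add_sub_cancel_right, mul_smul]⟩
  intro v v'
  obtain ⟨c, hφv, hLv⟩ := hdecomp v
  obtain ⟨c', hφv', hLv'⟩ := hdecomp v'
  rw [hφv, hφv', hLv, hLv', inner_smul_add_smul_smul_add_smul hew,
    inner_smul_add_smul_smul_add_smul horth, he]
  ring

/-- The pointwise pullback identity for the target differential of the corrugation process:
`⟨L(v), L(v')⟩ = ⟨φ(v), φ(v')⟩ + (r² − ‖φ(u)‖²)·ℓ(v)·ℓ(v')`. -/
theorem stmt3 (φ : E2 →ₗ[ℝ] E3) (hφ : Function.Injective φ)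
    (ℓ : E2 →ₗ[ℝ] ℝ) (hℓ : ℓ ≠ 0)
    (u : E2) (hu : ℓ u = 1)
    (w : E2) (hw : ℓ w = 0) (hw0 : w ≠ 0)
    (horth : ⟪φ u, φ w⟫ = 0)
    (r θ : ℝ)
    (t n : E3)
    (ht : t = ‖φ u‖⁻¹ • φ u)
    (hn : n = (‖φ u‖ * ‖φ w‖)⁻¹ • cross (φ u) (φ w))
    (L : E2 → E3)
    (hL : ∀ v : E2,
      L v = φ v - ℓ v • φ u + ℓ v • (r • (Real.cos θ • t + Real.sin θ • n))) :
    ∀ v v' : E2,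
      ⟪L v, L v'⟫ = ⟪φ v, φ v'⟫ + (r ^ 2 - ‖φ u‖ ^ 2) * (ℓ v * ℓ v') :=
  stmt3_general φ hφ ℓ u hu w hw hw0 horth r θ t n ht hn L hL
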